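/- arXiv:math/0306417 — 3 statements merged into one kernel-verified Lean document; each statement's English description precedes it below -/
import Mathlib

section
/- Let φ and ϕ be real-valued Schwartz functions on ℝ. Then for every Schwartz function f and every x ∈ ℝ, ∫_0^1 Σ_{m∈ℤ} ⟨f, Tr_{y+m} φ⟩ (Tr_{y+m} ϕ)(x) dy = (f * Φ)(x), where Φ(x) = ∫_ℝ φ(u) ϕ(x+u) du; in particular Φ̂ is the complex conjugate of φ̂ times ϕ̂. -/
open MeasureTheory Complex
open scoped ENNReal NNReal

/-- The Fourier transform `f̂(ξ) = ∫ f(x) e^{-i x ξ} dx`. -/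
noncomputable def ft (f : ℝ → ℂ) (ξ : ℝ) : ℂ :=
  ∫ x : ℝ, f x * Complex.exp (-(Complex.I * (x : ℂ) * (ξ : ℂ)))

/-- Any Schwartz function is (globally) bounded. -/
lemma schwartz_bound (φ : SchwartzMap ℝ ℝ) : ∃ C : ℝ, 0 ≤ C ∧ ∀ v : ℝ, ‖φ v‖ ≤ C := by
  obtain ⟨C, hC0, hC⟩ := φ.decay 0 0
  have key : ∀ v : ℝ, ‖φ v‖ ≤ C := by
    intro v
    have := hC v
    simpa [norm_iteratedFDeriv_zero] using this
  exact ⟨C, hC0.le, key⟩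

/-- Periodization: integrating the `ℤ`-periodization of an integrable function over a
fundamental domain recovers the full integral. -/
lemma periodize_eq {g : ℝ → ℂ} (hg : Integrable g) (hsm : StronglyMeasurable g) :
    ∫ y in Set.Ioc (0 : ℝ) 1, ∑' m : ℤ, g (y + (m : ℝ)) = ∫ s : ℝ, g s := by
  have hfin : ∑' m : ℤ, ∫⁻ y in Set.Ioc (0 : ℝ) 1, ‖g (y + (m : ℝ))‖₊ ≠ ⊤ := by
    have h1 : ∀ m : ℤ, ∫⁻ y in Set.Ioc (0 : ℝ) 1, ‖g (y + (m : ℝ))‖₊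
        = ∫⁻ s in Set.Ioc ((0 : ℝ) + m) ((0 : ℝ) + m + 1), ‖g s‖₊ := by
      intro m
      rw [(measurePreserving_add_right volume (m : ℝ)).setLIntegral_comp_emb
        (measurableEmbedding_addRight (m : ℝ)) (fun s => (‖g s‖₊ : ℝ≥0∞)) (Set.Ioc 0 1),
        Set.image_add_const_Ioc, show (1 : ℝ) + (m : ℝ) = (0 : ℝ) + m + 1 by ring]
    simp only [h1]
    rw [← lintegral_iUnion (fun m : ℤ => measurableSet_Ioc)
      (Set.pairwise_disjoint_Ioc_add_intCast (0 : ℝ)) fun s => (‖g s‖₊ : ℝ≥0∞),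
      iUnion_Ioc_add_intCast (0 : ℝ), Measure.restrict_univ]
    exact ne_of_lt hg.2
  have hswap := MeasureTheory.integral_tsum (μ := volume.restrict (Set.Ioc (0 : ℝ) 1))
    (f := fun (m : ℤ) (y : ℝ) => g (y + (m : ℝ)))
    (fun m => (hsm.comp_measurable (measurable_add_const (m : ℝ))).aestronglyMeasurable) hfin
  rw [hswap, ← hg.hasSum_intervalIntegral_comp_add_int.tsum_eq]
  exact tsum_congr fun m => (intervalIntegral.integral_of_le zero_le_one).symm

/-- Casting a real integral to `ℂ`. -/
lemma ofReal_integral_eq (f : ℝ → ℝ) : (((∫ x : ℝ, f x) : ℝ) : ℂ) = ∫ x : ℝ, ((f x : ℝ) : ℂ) :=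
  (integral_ofReal (𝕜 := ℂ)).symm

/-- **Averaging rank-one operators gives a convolution.**  Let `φ, ϕ` be real-valued
Schwartz functions on `ℝ`.  Then for every Schwartz `f` and every `x`,
`∫_0^1 ∑_{m ∈ ℤ} ⟨f, Tr_{y+m} φ⟩ (Tr_{y+m} ϕ)(x) dy = (f * Φ)(x)`, where
`Φ(v) = ∫ φ(u) ϕ(v+u) du`; in particular `Φ̂ = conj(φ̂) ϕ̂`
(for real `φ`, `conj(φ̂)` is the conjugate of `φ̂`). -/
theorem average_of_rank_one_is_convolution
    (φ ϕ : SchwartzMap ℝ ℝ) (f : SchwartzMap ℝ ℂ) :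
    (∀ x : ℝ,
      (∫ y in Set.Ioc (0 : ℝ) 1,
        ∑' m : ℤ,
          (∫ z : ℝ, f z * ((φ (z - (y + (m : ℝ))) : ℝ) : ℂ)) *
            ((ϕ (x - (y + (m : ℝ))) : ℝ) : ℂ))
        = ∫ t : ℝ, f t * (((∫ u : ℝ, φ u * ϕ ((x - t) + u)) : ℝ) : ℂ)) ∧
    ∀ ξ : ℝ,
      ft (fun v => (((∫ u : ℝ, φ u * ϕ (v + u)) : ℝ) : ℂ)) ξ
        = (starRingEnd ℂ) (ft (fun v => ((φ v : ℝ) : ℂ)) ξ) *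
            ft (fun v => ((ϕ v : ℝ) : ℂ)) ξ := by
  obtain ⟨Cφ, Cφ0, hCφ⟩ := schwartz_bound φ
  obtain ⟨Cϕ, Cϕ0, hCϕ⟩ := schwartz_bound ϕ
  have hfi : Integrable (fun z : ℝ => (f z : ℂ)) := f.integrable
  have hφi : Integrable (fun u : ℝ => ((φ u : ℝ) : ℂ)) := φ.integrable.ofReal
  have hϕi : Integrable (fun u : ℝ => ((ϕ u : ℝ) : ℂ)) := ϕ.integrable.ofReal
  constructor
  · intro x
    -- the joint integrand `(s, z) ↦ f z • φ (z - s)` is integrable and jointly continuous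
    have hQcont : Continuous fun p : ℝ × ℝ => f p.2 * ((φ (p.2 - p.1) : ℝ) : ℂ) := by
      exact (f.continuous.comp continuous_snd).mul
        (Complex.continuous_ofReal.comp (φ.continuous.comp (continuous_snd.sub continuous_fst)))
    have hQ : Integrable (fun p : ℝ × ℝ => f p.2 * ((φ (p.2 - p.1) : ℝ) : ℂ))
        (volume.prod volume) := by
      have hφneg : Integrable (fun u : ℝ => ((φ (0 - u) : ℝ) : ℂ)) := hφi.comp_sub_left 0
      have := hfi.convolution_integrand (ContinuousLinearMap.mul ℝ ℂ)
        (f := fun z : ℝ => (f z : ℂ)) (g := fun u : ℝ => ((φ (0 - u) : ℝ) : ℂ)) hφneg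
      refine this.congr (Filter.Eventually.of_forall fun p => ?_)
      simp only [ContinuousLinearMap.mul_apply']
      congr 3
      ring
    have csm : StronglyMeasurable fun s : ℝ => ∫ z : ℝ, f z * ((φ (z - s) : ℝ) : ℂ) :=
      hQcont.stronglyMeasurable.integral_prod_right'
    have hcb : ∀ s : ℝ, ‖∫ z : ℝ, f z * ((φ (z - s) : ℝ) : ℂ)‖ ≤ ∫ z : ℝ, ‖f z‖ * Cφ := by
      intro s
      refine norm_integral_le_of_norm_le (f.integrable.norm.mul_const Cφ)
        (Filter.Eventually.of_forall fun z => ?_)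
      rw [norm_mul]
      exact mul_le_mul_of_nonneg_left (by simpa using hCφ (z - s)) (norm_nonneg _)
    have hgint : Integrable
        (fun s : ℝ => (∫ z : ℝ, f z * ((φ (z - s) : ℝ) : ℂ)) * ((ϕ (x - s) : ℝ) : ℂ)) :=
      Integrable.bdd_mul (hϕi.comp_sub_left x) csm.aestronglyMeasurable (Filter.Eventually.of_forall hcb)
    have hgsm : StronglyMeasurable
        (fun s : ℝ => (∫ z : ℝ, f z * ((φ (z - s) : ℝ) : ℂ)) * ((ϕ (x - s) : ℝ) : ℂ)) :=
      csm.mul (Complex.continuous_ofReal.comp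
        (ϕ.continuous.comp (continuous_const.sub continuous_id))).stronglyMeasurable
    -- integrability of the full double integrand
    have hint2 : Integrable
        (fun p : ℝ × ℝ => f p.2 * ((φ (p.2 - p.1) : ℝ) : ℂ) * ((ϕ (x - p.1) : ℝ) : ℂ))
        (volume.prod volume) := by
      have hb : AEStronglyMeasurable (fun p : ℝ × ℝ => ((ϕ (x - p.1) : ℝ) : ℂ))
          (volume.prod volume) :=
        (Complex.continuous_ofReal.comp
          (ϕ.continuous.comp (continuous_const.sub continuous_fst))).aestronglyMeasurable
      have h := hQ.bdd_mul hb (Filter.Eventually.of_forall fun p => by simpa using hCϕ (x - p.1))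
      refine h.congr (Filter.Eventually.of_forall fun p => ?_)
      ring
    -- inner change-of-variables identity
    have inner : ∀ z : ℝ, (∫ s : ℝ, ((φ (z - s) : ℝ) : ℂ) * ((ϕ (x - s) : ℝ) : ℂ))
        = (((∫ u : ℝ, φ u * ϕ ((x - z) + u)) : ℝ) : ℂ) := by
      intro z
      have h0 : (fun s : ℝ => ((φ (z - s) : ℝ) : ℂ) * ((ϕ (x - s) : ℝ) : ℂ))
          = fun s : ℝ => ((fun u : ℝ => ((φ u * ϕ ((x - z) + u) : ℝ) : ℂ)) (z - s)) := by
        funext s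
        have harg : (x - z) + (z - s) = x - s := by ring
        simp only [harg]
        push_cast
        ring
      rw [h0, integral_sub_left_eq_self (fun u : ℝ => ((φ u * ϕ ((x - z) + u) : ℝ) : ℂ)) volume z]
      exact (ofReal_integral_eq _).symm
    calc
      (∫ y in Set.Ioc (0 : ℝ) 1,
          ∑' m : ℤ,
            (∫ z : ℝ, f z * ((φ (z - (y + (m : ℝ))) : ℝ) : ℂ)) *
              ((ϕ (x - (y + (m : ℝ))) : ℝ) : ℂ))
          = ∫ s : ℝ, (∫ z : ℝ, f z * ((φ (z - s) : ℝ) : ℂ)) * ((ϕ (x - s) : ℝ) : ℂ) :=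
        periodize_eq hgint hgsm
      _ = ∫ s : ℝ, ∫ z : ℝ, f z * ((φ (z - s) : ℝ) : ℂ) * ((ϕ (x - s) : ℝ) : ℂ) := by
        refine integral_congr_ae (Filter.Eventually.of_forall fun s => ?_)
        exact (integral_mul_const _ _).symm
      _ = ∫ z : ℝ, ∫ s : ℝ, f z * ((φ (z - s) : ℝ) : ℂ) * ((ϕ (x - s) : ℝ) : ℂ) :=
        integral_integral_swap hint2
      _ = ∫ t : ℝ, f t * (((∫ u : ℝ, φ u * ϕ ((x - t) + u)) : ℝ) : ℂ) := by
        refine integral_congr_ae (Filter.Eventually.of_forall fun z => ?_)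
        simp only [mul_assoc]
        rw [integral_const_mul, inner z]
  · intro ξ
    -- integrability of the kernel on the product space
    have hK : Integrable (fun p : ℝ × ℝ => ((φ p.2 : ℝ) : ℂ) * ((ϕ (p.1 + p.2) : ℝ) : ℂ))
        (volume.prod volume) := by
      have hP : Integrable (fun q : ℝ × ℝ => ((ϕ q.1 : ℝ) : ℂ) * ((φ q.2 : ℝ) : ℂ))
          (volume.prod volume) := hϕi.mul_prod hφi
      have hT : MeasurePreserving (fun p : ℝ × ℝ => (p.1 + p.2, p.2))
          (volume.prod volume) (volume.prod volume) := measurePreserving_add_prod volume volume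
      have h := (hT.integrable_comp hP.aestronglyMeasurable).mpr hP
      refine h.congr (Filter.Eventually.of_forall fun p => ?_)
      simp only [Function.comp_apply]
      ring
    have hKe : Integrable
        (fun p : ℝ × ℝ => ((φ p.2 : ℝ) : ℂ) * ((ϕ (p.1 + p.2) : ℝ) : ℂ) *
          Complex.exp (-(Complex.I * (p.1 : ℂ) * (ξ : ℂ)))) (volume.prod volume) := by
      have hb : AEStronglyMeasurable
          (fun p : ℝ × ℝ => Complex.exp (-(Complex.I * (p.1 : ℂ) * (ξ : ℂ))))
          (volume.prod volume) := by
        refine Continuous.aestronglyMeasurable ?_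
        exact Complex.continuous_exp.comp
          (((continuous_const.mul (Complex.continuous_ofReal.comp continuous_fst)).mul
            continuous_const).neg)
      have hbd : ∀ p : ℝ × ℝ, ‖Complex.exp (-(Complex.I * (p.1 : ℂ) * (ξ : ℂ)))‖ ≤ 1 := by
        intro p
        rw [Complex.norm_exp]
        simp [Complex.mul_re, Complex.mul_im]
      have h := hK.bdd_mul hb (Filter.Eventually.of_forall hbd)
      refine h.congr (Filter.Eventually.of_forall fun p => ?_)
      ring
    -- the inner integral in `v`
    have inner : ∀ u : ℝ,
        (∫ v : ℝ, ((φ u : ℝ) : ℂ) * ((ϕ (v + u) : ℝ) : ℂ) *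
            Complex.exp (-(Complex.I * (v : ℂ) * (ξ : ℂ))))
          = ((φ u : ℝ) : ℂ) * Complex.exp (Complex.I * (u : ℂ) * (ξ : ℂ)) *
            ∫ w : ℝ, ((ϕ w : ℝ) : ℂ) * Complex.exp (-(Complex.I * (w : ℂ) * (ξ : ℂ))) := by
      intro u
      have h1 : (fun v : ℝ => ((φ u : ℝ) : ℂ) * ((ϕ (v + u) : ℝ) : ℂ) *
            Complex.exp (-(Complex.I * (v : ℂ) * (ξ : ℂ))))
          = fun v : ℝ => ((fun w : ℝ => ((φ u : ℝ) : ℂ) *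
              Complex.exp (Complex.I * (u : ℂ) * (ξ : ℂ)) *
              (((ϕ w : ℝ) : ℂ) * Complex.exp (-(Complex.I * (w : ℂ) * (ξ : ℂ))))) (v + u)) := by
        funext v
        simp only
        have h2 : Complex.exp (Complex.I * (u : ℂ) * (ξ : ℂ)) *
            Complex.exp (-(Complex.I * ((v : ℝ) + (u : ℝ) : ℝ) * (ξ : ℂ)))
            = Complex.exp (-(Complex.I * (v : ℂ) * (ξ : ℂ))) := by
          rw [← Complex.exp_add]
          congr 1
          push_cast
          ring
        calc ((φ u : ℝ) : ℂ) * ((ϕ (v + u) : ℝ) : ℂ) *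
              Complex.exp (-(Complex.I * (v : ℂ) * (ξ : ℂ)))
            = ((φ u : ℝ) : ℂ) * ((ϕ (v + u) : ℝ) : ℂ) *
              (Complex.exp (Complex.I * (u : ℂ) * (ξ : ℂ)) *
                Complex.exp (-(Complex.I * ((v : ℝ) + (u : ℝ) : ℝ) * (ξ : ℂ)))) := by rw [h2]
          _ = _ := by ring
      rw [h1, integral_add_right_eq_self
        (fun w : ℝ => ((φ u : ℝ) : ℂ) * Complex.exp (Complex.I * (u : ℂ) * (ξ : ℂ)) *
          (((ϕ w : ℝ) : ℂ) * Complex.exp (-(Complex.I * (w : ℂ) * (ξ : ℂ))))) u,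
        integral_const_mul]
    -- conjugate of the Fourier transform of `φ`
    have hconj : (starRingEnd ℂ) (ft (fun v => ((φ v : ℝ) : ℂ)) ξ)
        = ∫ u : ℝ, ((φ u : ℝ) : ℂ) * Complex.exp (Complex.I * (u : ℂ) * (ξ : ℂ)) := by
      rw [show ft (fun v => ((φ v : ℝ) : ℂ)) ξ
          = ∫ u : ℝ, ((φ u : ℝ) : ℂ) * Complex.exp (-(Complex.I * (u : ℂ) * (ξ : ℂ))) from rfl,
        ← integral_conj]
      refine integral_congr_ae (Filter.Eventually.of_forall fun u => ?_)
      simp only [map_mul, Complex.conj_ofReal, ← Complex.exp_conj, map_neg, Complex.conj_I,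
        neg_mul, neg_neg]
    calc
      ft (fun v => (((∫ u : ℝ, φ u * ϕ (v + u)) : ℝ) : ℂ)) ξ
          = ∫ v : ℝ, (∫ u : ℝ, ((φ u : ℝ) : ℂ) * ((ϕ (v + u) : ℝ) : ℂ)) *
            Complex.exp (-(Complex.I * (v : ℂ) * (ξ : ℂ))) := by
        unfold ft
        refine integral_congr_ae (Filter.Eventually.of_forall fun v => ?_)
        beta_reduce
        congr 1
        rw [ofReal_integral_eq]
        simp only [Complex.ofReal_mul]
      _ = ∫ v : ℝ, ∫ u : ℝ, ((φ u : ℝ) : ℂ) * ((ϕ (v + u) : ℝ) : ℂ) *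
            Complex.exp (-(Complex.I * (v : ℂ) * (ξ : ℂ))) := by
        refine integral_congr_ae (Filter.Eventually.of_forall fun v => ?_)
        exact (integral_mul_const _ _).symm
      _ = ∫ u : ℝ, ∫ v : ℝ, ((φ u : ℝ) : ℂ) * ((ϕ (v + u) : ℝ) : ℂ) *
            Complex.exp (-(Complex.I * (v : ℂ) * (ξ : ℂ))) :=
        integral_integral_swap hKe
      _ = ∫ u : ℝ, ((φ u : ℝ) : ℂ) * Complex.exp (Complex.I * (u : ℂ) * (ξ : ℂ)) *
            ∫ w : ℝ, ((ϕ w : ℝ) : ℂ) * Complex.exp (-(Complex.I * (w : ℂ) * (ξ : ℂ))) := by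
        refine integral_congr_ae (Filter.Eventually.of_forall fun u => ?_)
        exact inner u
      _ = (∫ u : ℝ, ((φ u : ℝ) : ℂ) * Complex.exp (Complex.I * (u : ℂ) * (ξ : ℂ))) *
            ∫ w : ℝ, ((ϕ w : ℝ) : ℂ) * Complex.exp (-(Complex.I * (w : ℂ) * (ξ : ℂ))) :=
        integral_mul_const _ _
      _ = (starRingEnd ℂ) (ft (fun v => ((φ v : ℝ) : ℂ)) ξ) *
            ft (fun v => ((ϕ v : ℝ) : ℂ)) ξ := by
        rw [hconj]
        rfl
end

section
/- Let ψ : ℝ → ℂ be a measurable function satisfying |ψ(x)| ≤ A (1+|x|)^{-20} for all x. Fix an interval ω ⊂ ℝ, and let T({ω}) be the set of tiles s = I_s × ω with I_s dyadic and 1 ≤ |I_s|·|ω| < 2, and set ψ_s(x) = |I_s|^{-1/2} ψ((x − c(I_s))/|I_s|) e^{i c(ω) x}. Then there is a constant C depending only on A such that Σ_{s∈T({ω})} |⟨f, ψ_s⟩|² ≤ C ‖f‖_{L²(ℝ)}² for all f ∈ L²(ℝ). -/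
open MeasureTheory Complex
open scoped ENNReal NNReal

/-- The dyadic interval `[n 2^k, (n+1) 2^k)`. -/
noncomputable def dyI (k n : ℤ) : Set ℝ :=
  Set.Ico ((n : ℝ) * 2 ^ k) (((n : ℝ) + 1) * 2 ^ k)

/-- The center of the dyadic interval `[n 2^k, (n+1) 2^k)`. -/
noncomputable def dyCen (k n : ℤ) : ℝ := ((n : ℝ) + 1/2) * 2 ^ k

/-- The tile function `ψ_s(x) = |I_s|^{-1/2} ψ((x − c(I_s))/|I_s|) e^{i c(ω) x}`
for the tile `s = I_s × ω` with `I_s = [n 2^k, (n+1) 2^k)` and `c = c(ω)`. -/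
noncomputable def tileFn (ψ : ℝ → ℂ) (k n : ℤ) (c : ℝ) (x : ℝ) : ℂ :=
  ((Real.sqrt ((2:ℝ) ^ k))⁻¹ : ℝ) * ψ ((x - dyCen k n) / (2:ℝ) ^ k) *
    Complex.exp (Complex.I * (c : ℂ) * (x : ℂ))

/-- The inner product `⟨f, ψ_s⟩ = ∫ f \overline{ψ_s}`. -/
noncomputable def tileInner (ψ : ℝ → ℂ) (k n : ℤ) (c : ℝ) (f : ℝ → ℂ) : ℂ :=
  ∫ x : ℝ, f x * (starRingEnd ℂ) (tileFn ψ k n c x)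

/-!
Only one scale `2^k` satisfies `1 ≤ 2^k |ω| < 2`, so the sum runs over the translates
`ψ_{k,n}`, `n ∈ ℤ`, of a single scale. Cauchy–Schwarz gives
`|⟨f, ψ_s⟩|² ≤ (∫ |f|² |ψ_s|) (∫ |ψ_s|)`, and summing over `n` (Schur's test) leaves the
constant `sup_s ∫ |ψ_s| · sup_x ∑_n |ψ_s(x)|`. The first factor is `2^{k/2} ‖ψ‖₁`, the second
at most `2^{-k/2} A ∑_n (1 + |t - n|)^{-20}`, which is bounded uniformly in `t`; the powers of `2^k`
cancel.
-/

theorem sq_lintegral_mul_le {α : Type*} [MeasurableSpace α] {μ : Measure α}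
    {F w : α → ℝ≥0∞} (hF : AEMeasurable F μ) (hw : AEMeasurable w μ) :
    (∫⁻ x, F x * w x ∂μ) ^ 2 ≤ (∫⁻ x, F x ^ 2 * w x ∂μ) * ∫⁻ x, w x ∂μ := by
  have h2 : (2 : ℕ) ≠ 0 := two_ne_zero
  have hsplit : ∀ x, (F x ^ 2 * w x) ^ (2⁻¹ : ℝ) * w x ^ (2⁻¹ : ℝ) = F x * w x := fun x => by
    rw [← ENNReal.mul_rpow_of_nonneg _ _ (by norm_num), mul_assoc, ← sq, ← mul_pow]
    exact_mod_cast ENNReal.pow_rpow_inv_natCast h2 (F x * w x)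
  have holder := ENNReal.lintegral_mul_norm_pow_le (f := fun x => F x ^ 2 * w x)
    ((hF.pow_const 2).mul hw) hw (p := 2⁻¹) (q := 2⁻¹) (by norm_num) (by norm_num) (by norm_num)
  simp_rw [hsplit] at holder
  calc (∫⁻ x, F x * w x ∂μ) ^ 2
      ≤ ((∫⁻ x, F x ^ 2 * w x ∂μ) ^ (2⁻¹ : ℝ) * (∫⁻ x, w x ∂μ) ^ (2⁻¹ : ℝ)) ^ 2 :=
        pow_le_pow_left' holder 2
    _ = (∫⁻ x, F x ^ 2 * w x ∂μ) * ∫⁻ x, w x ∂μ := by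
        rw [mul_pow]
        have hsq : ∀ y : ℝ≥0∞, (y ^ (2⁻¹ : ℝ)) ^ 2 = y := by
          simpa using ENNReal.rpow_inv_natCast_pow h2
        rw [hsq, hsq]

theorem tsum_sq_lintegral_mul_le {α ι : Type*} [MeasurableSpace α] {μ : Measure α}
    [Countable ι] {F : α → ℝ≥0∞} {w : ι → α → ℝ≥0∞} (hF : AEMeasurable F μ)
    (hw : ∀ i, AEMeasurable (w i) μ)
    {a b : ℝ≥0∞} (hint : ∀ i, ∫⁻ x, w i x ∂μ ≤ a) (hsum : ∀ᵐ x ∂μ, ∑' i, w i x ≤ b) :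
    ∑' i, (∫⁻ x, F x * w i x ∂μ) ^ 2 ≤ a * b * ∫⁻ x, F x ^ 2 ∂μ := by
  calc ∑' i, (∫⁻ x, F x * w i x ∂μ) ^ 2
      ≤ ∑' i, (∫⁻ x, F x ^ 2 * w i x ∂μ) * a :=
        ENNReal.tsum_le_tsum fun i =>
          (sq_lintegral_mul_le hF (hw i)).trans (by gcongr; exact hint i)
    _ = a * ∫⁻ x, ∑' i, F x ^ 2 * w i x ∂μ := by
        rw [ENNReal.tsum_mul_right, mul_comm]
        exact congrArg _ (lintegral_tsum fun i => (hF.pow_const 2).mul (hw i)).symm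
    _ ≤ a * ∫⁻ x, F x ^ 2 * b ∂μ := by
        simp_rw [ENNReal.tsum_mul_left]
        exact mul_le_mul' le_rfl (lintegral_mono_ae (hsum.mono fun x hx => by gcongr))
    _ = a * b * ∫⁻ x, F x ^ 2 ∂μ := by
        rw [lintegral_mul_const'' _ (hF.pow_const 2), mul_assoc, mul_comm b]

theorem lintegral_enorm_le_ofReal_mul_integral {α E : Type*} [MeasurableSpace α]
    {μ : Measure α} [NormedAddCommGroup E] {φ : α → E} {g : α → ℝ} {A : ℝ} (hg : Integrable g μ)
    (hφ : ∀ x, ‖φ x‖ ≤ A * g x) :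
    ∫⁻ x, ‖φ x‖ₑ ∂μ ≤ ENNReal.ofReal (A * ∫ x, g x ∂μ) := by
  calc ∫⁻ x, ‖φ x‖ₑ ∂μ ≤ ∫⁻ x, ENNReal.ofReal (A * g x) ∂μ :=
        lintegral_mono fun x => by
          rw [← ofReal_norm]; exact ENNReal.ofReal_le_ofReal (hφ x)
    _ = ENNReal.ofReal (A * ∫ x, g x ∂μ) := by
        rw [← integral_const_mul, ofReal_integral_eq_lintegral_ofReal (hg.const_mul A)
          (ae_of_all _ fun x => (norm_nonneg _).trans (hφ x))]

theorem lintegral_comp_sub_div (g : ℝ → ℝ≥0∞) (a : ℝ) {b : ℝ} (hb : 0 < b) :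
    ∫⁻ x, g ((x - a) / b) = ENNReal.ofReal b * ∫⁻ y, g y := by
  rw [lintegral_sub_right_eq_self (fun x => g (x / b)) a]
  have hscale := lintegral_map_equiv g (MeasurableEquiv.mulLeft₀ b⁻¹ (inv_ne_zero hb.ne'))
    (μ := volume)
  simp only [MeasurableEquiv.coe_mulLeft₀, Real.map_volume_mul_left (inv_ne_zero hb.ne'),
    inv_inv, abs_of_pos hb, lintegral_smul_measure, smul_eq_mul] at hscale
  simp_rw [div_eq_inv_mul, hscale]

section Decay

variable {N : ℕ}

theorem integrable_inv_one_add_abs_pow (hN : 1 < N) :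
    Integrable fun y : ℝ => ((1 + |y|) ^ N)⁻¹ := by
  refine (integrable_one_add_norm (E := ℝ) (μ := volume) (r := N) (by simpa using hN)).congr
    (Filter.Eventually.of_forall fun y => ?_)
  simp [Real.rpow_neg (by positivity : (0:ℝ) ≤ 1 + |y|)]

theorem summable_inv_one_add_abs_int_pow (hN : 1 < N) :
    Summable fun n : ℤ => ((1 + |(n : ℝ)|) ^ N)⁻¹ := by
  have hnat : Summable fun n : ℕ => ((1 + (n : ℝ)) ^ N)⁻¹ :=
    ((summable_nat_add_iff 1).2 (Real.summable_nat_pow_inv.2 hN)).congr fun n => by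
      push_cast; ring_nf
  exact .of_nat_of_neg (by simpa using hnat) (by simpa using hnat)

theorem tsum_inv_one_add_abs_sub_int_pow_le (t : ℝ) :
    ∑' n : ℤ, ENNReal.ofReal ((1 + |t - n|) ^ N)⁻¹
      ≤ 2 ^ N * ∑' n : ℤ, ENNReal.ofReal ((1 + |(n : ℝ)|) ^ N)⁻¹ := by
  set m := ⌊t⌋
  have hterm : ∀ n : ℤ, ENNReal.ofReal ((1 + |t - n|) ^ N)⁻¹
      ≤ 2 ^ N * ENNReal.ofReal ((1 + |((m - n : ℤ) : ℝ)|) ^ N)⁻¹ := fun n => by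
    have hmt : |(m : ℝ) - t| ≤ 1 := by
      rw [abs_sub_comm, abs_of_nonneg (sub_nonneg.2 (Int.floor_le t))]
      linarith [Int.lt_floor_add_one t]
    have hdist : (1 + |((m - n : ℤ) : ℝ)|) / 2 ≤ 1 + |t - n| := by
      push_cast
      linarith [abs_sub_le (m : ℝ) t n, abs_nonneg (t - n)]
    rw [← ENNReal.ofReal_ofNat 2, ← ENNReal.ofReal_pow zero_le_two,
      ← ENNReal.ofReal_mul (by positivity)]
    refine ENNReal.ofReal_le_ofReal ?_
    calc ((1 + |t - n|) ^ N)⁻¹ ≤ (((1 + |((m - n : ℤ) : ℝ)|) / 2) ^ N)⁻¹ := by gcongr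
      _ = 2 ^ N * ((1 + |((m - n : ℤ) : ℝ)|) ^ N)⁻¹ := by
          rw [div_pow, inv_div, div_eq_inv_mul]; ring
  calc ∑' n : ℤ, ENNReal.ofReal ((1 + |t - n|) ^ N)⁻¹
      ≤ ∑' n : ℤ, 2 ^ N * ENNReal.ofReal ((1 + |((m - n : ℤ) : ℝ)|) ^ N)⁻¹ :=
        ENNReal.tsum_le_tsum hterm
    _ = 2 ^ N * ∑' n : ℤ, ENNReal.ofReal ((1 + |(n : ℝ)|) ^ N)⁻¹ := by
        rw [ENNReal.tsum_mul_left]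
        exact congrArg _
          ((Equiv.subLeft m).tsum_eq fun n : ℤ => ENNReal.ofReal ((1 + |(n : ℝ)|) ^ N)⁻¹)

end Decay

theorem tsum_prod_ite_le {ι κ : Type*} {p : ι → Prop} [DecidablePred p]
    (hp : {i | p i}.Subsingleton) {g : ι → κ → ℝ≥0∞} {B : ℝ≥0∞} (hg : ∀ i, p i → ∑' j, g i j ≤ B) :
    ∑' x : ι × κ, (if p x.1 then g x.1 x.2 else 0) ≤ B := by
  rw [ENNReal.tsum_prod']
  by_cases hex : ∃ i, p i
  · obtain ⟨i, hi⟩ := hex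
    rw [tsum_eq_single i fun j hj => by simp [show ¬p j from fun hj' => hj (hp hj' hi)]]
    simpa [hi] using hg i hi
  · push Not at hex
    simp [hex]

theorem subsingleton_setOf_one_le_two_zpow_mul_lt_two (d : ℝ) :
    {k : ℤ | 1 ≤ (2 : ℝ) ^ k * d ∧ (2 : ℝ) ^ k * d < 2}.Subsingleton := by
  have hgap : ∀ k l : ℤ, k < l → 1 ≤ (2 : ℝ) ^ k * d → 2 ≤ (2 : ℝ) ^ l * d :=
      fun k l hkl hk => by
    have h2 : (2 : ℝ) ≤ 2 ^ (l - k) := by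
      simpa using zpow_le_zpow_right₀ one_le_two (show (1 : ℤ) ≤ l - k by omega)
    calc (2 : ℝ) ≤ 2 ^ (l - k) * (2 ^ k * d) := by nlinarith
      _ = 2 ^ l * d := by rw [← mul_assoc, ← zpow_add₀ two_ne_zero, sub_add_cancel]
  intro k hk l hl
  rcases lt_trichotomy k l with hkl | rfl | hlk
  · exact absurd hl.2 (not_lt.2 (hgap k l hkl hk.1))
  · rfl
  · exact absurd hk.2 (not_lt.2 (hgap l k hlk hl.1))

section Tiles

theorem enorm_tileFn (ψ : ℝ → ℂ) (k n : ℤ) (c x : ℝ) :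
    ‖tileFn ψ k n c x‖ₑ =
      ENNReal.ofReal (√((2 : ℝ) ^ k))⁻¹ * ‖ψ ((x - dyCen k n) / 2 ^ k)‖ₑ := by
  have hphase : Complex.I * (c : ℂ) * (x : ℂ) = Complex.I * ((c * x : ℝ) : ℂ) := by
    push_cast; ring
  rw [tileFn, enorm_mul, enorm_mul, hphase, enorm_exp_I_mul_ofReal, mul_one,
    ← ofReal_norm, Complex.norm_real, Real.norm_of_nonneg (by positivity)]

theorem enorm_tileInner_le (ψ : ℝ → ℂ) (k n : ℤ) (c : ℝ) (f : ℝ → ℂ) :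
    ‖tileInner ψ k n c f‖ₑ ≤ ENNReal.ofReal (√((2 : ℝ) ^ k))⁻¹ *
      ∫⁻ x, ‖f x‖ₑ * ‖ψ ((x - dyCen k n) / 2 ^ k)‖ₑ := by
  refine (enorm_integral_le_lintegral_enorm _).trans_eq ?_
  rw [← lintegral_const_mul' _ _ ENNReal.ofReal_ne_top]
  simp_rw [enorm_mul, RCLike.enorm_conj, enorm_tileFn, mul_left_comm]

variable {ψ : ℝ → ℂ} {A : ℝ} {N : ℕ}

theorem tsum_enorm_comp_sub_dyCen_le (hψ : ∀ x, ‖ψ x‖ ≤ A * ((1 + |x|) ^ N)⁻¹)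
    (k : ℤ) (x : ℝ) :
    ∑' n : ℤ, ‖ψ ((x - dyCen k n) / 2 ^ k)‖ₑ
      ≤ ENNReal.ofReal A * (2 ^ N * ∑' n : ℤ, ENNReal.ofReal ((1 + |(n : ℝ)|) ^ N)⁻¹) := by
  have harg : ∀ n : ℤ, (x - dyCen k n) / 2 ^ k = (x / 2 ^ k - 1 / 2) - n := fun n => by
    rw [dyCen]; field_simp; ring
  calc ∑' n : ℤ, ‖ψ ((x - dyCen k n) / 2 ^ k)‖ₑ
      ≤ ∑' n : ℤ,
          ENNReal.ofReal A * ENNReal.ofReal ((1 + |(x / 2 ^ k - 1 / 2) - n|) ^ N)⁻¹ :=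
        ENNReal.tsum_le_tsum fun n => by
          rw [← ENNReal.ofReal_mul' (by positivity), ← ofReal_norm, harg]
          exact ENNReal.ofReal_le_ofReal (hψ _)
    _ ≤ _ := by
        rw [ENNReal.tsum_mul_left]
        gcongr
        exact tsum_inv_one_add_abs_sub_int_pow_le _

theorem tsum_enorm_tileInner_sq_le (hψm : Measurable ψ)
    (hψ : ∀ x, ‖ψ x‖ ≤ A * ((1 + |x|) ^ N)⁻¹) (k : ℤ) (c : ℝ) {f : ℝ → ℂ}
    (hf : AEMeasurable f) :
    ∑' n : ℤ, ‖tileInner ψ k n c f‖ₑ ^ 2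
      ≤ (∫⁻ y, ‖ψ y‖ₑ) *
          (ENNReal.ofReal A * (2 ^ N * ∑' n : ℤ, ENNReal.ofReal ((1 + |(n : ℝ)|) ^ N)⁻¹)) *
        ∫⁻ x, ‖f x‖ₑ ^ 2 := by
  set r := ENNReal.ofReal (√((2 : ℝ) ^ k))⁻¹
  have hb : (0 : ℝ) < 2 ^ k := by positivity
  have hr : r ^ 2 * ENNReal.ofReal (2 ^ k) = 1 := by
    rw [← ENNReal.ofReal_pow (by positivity), ← ENNReal.ofReal_mul (by positivity), inv_pow,
      Real.sq_sqrt hb.le, inv_mul_cancel₀ hb.ne', ENNReal.ofReal_one]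
  calc ∑' n : ℤ, ‖tileInner ψ k n c f‖ₑ ^ 2
      ≤ ∑' n : ℤ, r ^ 2 * (∫⁻ x, ‖f x‖ₑ * ‖ψ ((x - dyCen k n) / 2 ^ k)‖ₑ) ^ 2 :=
        ENNReal.tsum_le_tsum fun n => by
          rw [← mul_pow]; gcongr; exact enorm_tileInner_le ψ k n c f
    _ = r ^ 2 * ∑' n : ℤ, (∫⁻ x, ‖f x‖ₑ * ‖ψ ((x - dyCen k n) / 2 ^ k)‖ₑ) ^ 2 :=
        ENNReal.tsum_mul_left
    _ ≤ r ^ 2 * (ENNReal.ofReal (2 ^ k) * (∫⁻ y, ‖ψ y‖ₑ) * (ENNReal.ofReal A *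
          (2 ^ N * ∑' n : ℤ, ENNReal.ofReal ((1 + |(n : ℝ)|) ^ N)⁻¹)) * ∫⁻ x, ‖f x‖ₑ ^ 2) := by
        gcongr
        refine tsum_sq_lintegral_mul_le hf.enorm
          (fun n => (hψm.comp ((measurable_id.sub_const _).div_const _)).enorm.aemeasurable)
          (fun n => ?_) (ae_of_all _ (tsum_enorm_comp_sub_dyCen_le hψ k))
        exact (lintegral_comp_sub_div (fun y => ‖ψ y‖ₑ) _ hb).le
    _ = r ^ 2 * ENNReal.ofReal (2 ^ k) * ((∫⁻ y, ‖ψ y‖ₑ) * (ENNReal.ofReal A *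
          (2 ^ N * ∑' n : ℤ, ENNReal.ofReal ((1 + |(n : ℝ)|) ^ N)⁻¹)) * ∫⁻ x, ‖f x‖ₑ ^ 2) := by
        ring
    _ = _ := by rw [hr, one_mul]

theorem tsum_enorm_tileInner_sq_le_of_decay (hN : 1 < N) (hψm : Measurable ψ)
    (hψ : ∀ x, ‖ψ x‖ ≤ A * ((1 + |x|) ^ N)⁻¹) (k : ℤ) (c : ℝ) {f : ℝ → ℂ}
    (hf : AEMeasurable f) :
    ∑' n : ℤ, ‖tileInner ψ k n c f‖ₑ ^ 2
      ≤ ENNReal.ofReal (A ^ 2 * (∫ y : ℝ, ((1 + |y|) ^ N)⁻¹) *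
          (2 ^ N * ∑' n : ℤ, ((1 + |(n : ℝ)|) ^ N)⁻¹)) * ∫⁻ x, ‖f x‖ₑ ^ 2 := by
  have hA : 0 ≤ A := by simpa using (norm_nonneg _).trans (hψ 0)
  have hψ1 := lintegral_enorm_le_ofReal_mul_integral (integrable_inv_one_add_abs_pow hN) hψ
  have hS : ∑' n : ℤ, ENNReal.ofReal ((1 + |(n : ℝ)|) ^ N)⁻¹
      = ENNReal.ofReal (∑' n : ℤ, ((1 + |(n : ℝ)|) ^ N)⁻¹) :=
    (ENNReal.ofReal_tsum_of_nonneg (fun n => by positivity)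
      (summable_inv_one_add_abs_int_pow hN)).symm
  have h2N : (2 : ℝ≥0∞) ^ N = ENNReal.ofReal (2 ^ N) := by
    rw [ENNReal.ofReal_pow zero_le_two, ENNReal.ofReal_ofNat]
  calc ∑' n : ℤ, ‖tileInner ψ k n c f‖ₑ ^ 2
      ≤ ENNReal.ofReal (A * ∫ y : ℝ, ((1 + |y|) ^ N)⁻¹) *
          ENNReal.ofReal (A * (2 ^ N * ∑' n : ℤ, ((1 + |(n : ℝ)|) ^ N)⁻¹)) *
          ∫⁻ x, ‖f x‖ₑ ^ 2 := by
        refine (tsum_enorm_tileInner_sq_le hψm hψ k c hf).trans ?_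
        rw [hS, h2N, ← ENNReal.ofReal_mul (by positivity), ← ENNReal.ofReal_mul hA]
        gcongr
    _ = _ := by
        rw [← ENNReal.ofReal_mul (mul_nonneg hA (integral_nonneg fun y => by positivity))]
        ring_nf

end Tiles

/-- **The basic `L²` estimate for a single frequency interval.**  If
`|ψ(x)| ≤ A (1+|x|)^{-20}` then, for any interval `ω = (u,v)`, summing over all tiles
`s = I_s × ω` (i.e. `I_s = [n2^k, (n+1)2^k)` dyadic with `1 ≤ |I_s| |ω| < 2`),
`∑_{s ∈ T({ω})} |⟨f, ψ_s⟩|² ≤ C ‖f‖₂²`, where `C` depends only on `A`. -/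
theorem tile_L2_bound_single_frequency (A : ℝ) :
    ∃ C : ℝ, 0 < C ∧
      ∀ ψ : ℝ → ℂ, Measurable ψ →
        (∀ x : ℝ, ‖ψ x‖ ≤ A * ((1 + |x|) ^ (20 : ℕ))⁻¹) →
        ∀ u v : ℝ, u < v →
        ∀ f : ℝ → ℂ, MemLp f 2 volume →
          (∑' s : ℤ × ℤ,
            if 1 ≤ (2:ℝ) ^ s.1 * (v - u) ∧ (2:ℝ) ^ s.1 * (v - u) < 2
            then (‖tileInner ψ s.1 s.2 ((u + v) / 2) f‖₊ : ℝ≥0∞) ^ 2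
            else 0)
            ≤ ENNReal.ofReal C * ∫⁻ x : ℝ, (‖f x‖₊ : ℝ≥0∞) ^ 2 := by
  refine ⟨A ^ 2 * (∫ y : ℝ, ((1 + |y|) ^ 20)⁻¹) *
      (2 ^ 20 * ∑' n : ℤ, ((1 + |(n : ℝ)|) ^ 20)⁻¹) + 1, by positivity,
    fun ψ hψm hψ u v _ f hf => ?_⟩
  simp only [← enorm_eq_nnnorm]
  refine tsum_prod_ite_le (g := fun k n => ‖tileInner ψ k n ((u + v) / 2) f‖ₑ ^ 2)
    (subsingleton_setOf_one_le_two_zpow_mul_lt_two (v - u)) fun k _ => ?_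
  refine (tsum_enorm_tileInner_sq_le_of_decay (by norm_num) hψm hψ k _
    hf.aestronglyMeasurable.aemeasurable).trans ?_
  gcongr
  linarith
end

section
/- Let α be a map from the dyadic intervals of ℝ to [0,∞) with finite Carleson measure norm ‖α‖_CM = sup_{J dyadic} |J|^{-1} Σ_{I dyadic, I⊂J} α(I). Then for every 1 < p < ∞ there is a constant C_p such that for every dyadic interval J, ‖Σ_{I dyadic, I⊂J} (α(I)/|I|) 1_I‖_{L^p(ℝ)} ≤ C_p ‖α‖_CM |J|^{1/p}. -/
/-!
Write `F_J = ∑_{I ⊆ J} α(I)/|I| 1_I` and `N` for the Carleson constant of `α`. A stopping time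
gives exponential decay of the distribution of `F_J`. Every point of `{F_J > t + 2N}` lies in a
maximal dyadic `I ⊆ J` for which `∑_{I ⊆ I' ⊆ J} α(I')/|I'| > 2N`; the sum over `I ⊊ I' ⊆ J` is
at most `2N`, so `F_I > t` at that point. These maximal intervals are disjoint and lie in
`{F_J > 2N}`, which has measure at most `|J|/2` by Chebyshev and the Carleson condition, whence
`|{F_J > t + 2N}| ≤ sup_I (|{F_I > t}| / |I|) · |J|/2`. Iterating, `|{F_J > 2kN}| ≤ 2^{-k} |J|`, and
summing over the layers `{2kN < F_J ≤ 2(k+1)N}` gives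
`∫ F_J^p ≤ (2N)^p ∑_k (k+1)^p 2^{-k} |J|`.
-/

open MeasureTheory
open scoped ENNReal NNReal
attribute [local instance] Classical.propDecidable

lemma measurableSet_dyI (k n : ℤ) : MeasurableSet (dyI k n) := measurableSet_Ico

lemma volume_dyI (k n : ℤ) : volume (dyI k n) = ENNReal.ofReal ((2 : ℝ) ^ k) := by
  rw [dyI, Real.volume_Ico]
  ring_nf

lemma mem_dyI_iff {k n : ℤ} {x : ℝ} : x ∈ dyI k n ↔ ⌊x / 2 ^ k⌋ = n := by
  have h := zpow_pos (two_pos : (0 : ℝ) < 2) k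
  rw [dyI, Set.mem_Ico, Int.floor_eq_iff, le_div_iff₀ h, div_lt_iff₀ h]

lemma floor_div_two_zpow_of_le {k j : ℤ} (hkj : k ≤ j) (x : ℝ) :
    ⌊x / 2 ^ j⌋ = ⌊x / 2 ^ k⌋ / 2 ^ (j - k).toNat := by
  have h : (2 : ℝ) ^ j = 2 ^ k * ((2 ^ (j - k).toNat : ℕ) : ℝ) := by
    rw [Nat.cast_pow, Nat.cast_ofNat, ← zpow_natCast, Int.toNat_of_nonneg (by omega),
      ← zpow_add₀ two_ne_zero, add_sub_cancel]
  rw [h, ← div_div, Int.floor_div_natCast]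
  push_cast
  rfl

lemma floor_div_eq_of_mem_dyI {k j n : ℤ} (hkj : k ≤ j) {x y : ℝ} (hx : x ∈ dyI k n)
    (hy : y ∈ dyI k n) : ⌊x / 2 ^ j⌋ = ⌊y / 2 ^ j⌋ := by
  rw [floor_div_two_zpow_of_le hkj, floor_div_two_zpow_of_le hkj, mem_dyI_iff.1 hx,
    mem_dyI_iff.1 hy]

lemma dyI_subset_of_le {k j n m : ℤ} (hkj : k ≤ j) {x : ℝ} (hxn : x ∈ dyI k n)
    (hxm : x ∈ dyI j m) : dyI k n ⊆ dyI j m := fun _ hy =>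
  mem_dyI_iff.2 ((floor_div_eq_of_mem_dyI hkj hy hxn).trans (mem_dyI_iff.1 hxm))

lemma le_of_dyI_subset {k j n m : ℤ} (h : dyI k n ⊆ dyI j m) : k ≤ j := by
  have hvol := measure_mono (μ := volume) h
  rw [volume_dyI, volume_dyI, ENNReal.ofReal_le_ofReal_iff (zpow_pos two_pos j).le] at hvol
  exact (zpow_le_zpow_iff_right₀ one_lt_two).1 hvol

lemma tsum_int_ite_le_eq_tsum_nat {M : Type*} [AddCommMonoid M] [TopologicalSpace M]
    (f : ℤ → M) (l : ℤ) : ∑' k : ℤ, (if k ≤ l then f k else 0) = ∑' d : ℕ, f (l - d) := by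
  have hsupp : Function.support (fun k => if k ≤ l then f k else 0) ⊆
      Set.range fun d : ℕ => l - d := fun k hk => by
    have : k ≤ l := by by_contra h; exact hk (if_neg h)
    exact ⟨(l - k).toNat, by simp only; omega⟩
  rw [← Function.Injective.tsum_eq (fun a b h => by simpa using h) hsupp]
  exact tsum_congr fun d => if_pos (by omega)

lemma rpow_le_tsum_indicator {c : ℝ≥0∞} (hc₀ : c ≠ 0) (hc : c ≠ ∞) {p : ℝ} (hp : 0 < p)
    (a : ℝ≥0∞) :
    a ^ p ≤ ∑' k : ℕ, (Set.Ioi ((k : ℝ≥0∞) * c)).indicator (fun _ => ((k + 1) * c) ^ p) a := by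
  rcases eq_or_ne a 0 with rfl | ha₀
  · simp [ENNReal.zero_rpow_of_pos hp]
  rcases eq_or_ne a ∞ with rfl | ha
  · calc ∞ ^ p = ∑' _ : ℕ, c ^ p := by
          rw [ENNReal.top_rpow_of_pos hp, ENNReal.tsum_const_eq_top_of_ne_zero
            (ENNReal.rpow_pos (pos_iff_ne_zero.2 hc₀) hc).ne']
      _ ≤ _ := ENNReal.tsum_le_tsum fun k => by
          rw [Set.indicator_of_mem (Set.mem_Ioi.2 (ENNReal.mul_lt_top (by simp) hc.lt_top))]
          gcongr
          exact le_mul_of_one_le_left' le_add_self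
  have hex : ∃ k : ℕ, a ≤ (k + 1) * c := by
    obtain ⟨n, hn⟩ := ENNReal.exists_nat_mul_gt hc₀ ha
    exact ⟨n, hn.le.trans (by gcongr; exact le_self_add)⟩
  have hlayer : (Nat.find hex : ℝ≥0∞) * c < a := by
    rcases Nat.eq_zero_or_pos (Nat.find hex) with h | h
    · simpa [h] using pos_iff_ne_zero.2 ha₀
    · obtain ⟨j, hj⟩ := Nat.exists_eq_succ_of_ne_zero h.ne'
      have := Nat.find_min hex (show j < Nat.find hex by omega)
      rw [hj]
      push_cast
      exact not_le.1 this
  calc a ^ p ≤ ((Nat.find hex + 1) * c) ^ p := by gcongr; exact Nat.find_spec hex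
    _ = (Set.Ioi ((Nat.find hex : ℝ≥0∞) * c)).indicator
          (fun _ => ((Nat.find hex + 1 : ℝ≥0∞) * c) ^ p) a :=
        (Set.indicator_of_mem (Set.mem_Ioi.2 hlayer)
          fun _ => ((Nat.find hex + 1 : ℝ≥0∞) * c) ^ p).symm
    _ ≤ _ := ENNReal.le_tsum (Nat.find hex)

lemma setLIntegral_rpow_le_of_volume_superlevel_le {X : Type*} [MeasurableSpace X]
    {μ : Measure X} {s : Set X} {f : X → ℝ≥0∞} (hf : Measurable f) {c : ℝ≥0∞} (hc₀ : c ≠ 0)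
    (hc : c ≠ ∞) {p : ℝ} (hp : 0 < p)
    (hdecay : ∀ k : ℕ, μ (s ∩ {x | (k : ℝ≥0∞) * c < f x}) ≤ 2⁻¹ ^ k * μ s) :
    ∫⁻ x in s, f x ^ p ∂μ ≤ c ^ p * (∑' k : ℕ, ((k : ℝ≥0∞) + 1) ^ p * 2⁻¹ ^ k) * μ s := by
  have hmeas : ∀ k : ℕ, MeasurableSet {x | (k : ℝ≥0∞) * c < f x} :=
    fun k => measurableSet_lt measurable_const hf
  calc ∫⁻ x in s, f x ^ p ∂μ
      ≤ ∫⁻ x in s, ∑' k : ℕ, {x | (k : ℝ≥0∞) * c < f x}.indicator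
          (fun _ => ((k + 1) * c) ^ p) x ∂μ :=
        lintegral_mono fun x => rpow_le_tsum_indicator hc₀ hc hp (f x)
    _ = ∑' k : ℕ, ((k + 1) * c) ^ p * μ (s ∩ {x | (k : ℝ≥0∞) * c < f x}) := by
        rw [lintegral_tsum fun k => (measurable_const.indicator (hmeas k)).aemeasurable]
        refine tsum_congr fun k => ?_
        rw [lintegral_indicator_const (hmeas k), Measure.restrict_apply (hmeas k),
          Set.inter_comm]
    _ ≤ ∑' k : ℕ, ((k + 1) * c) ^ p * (2⁻¹ ^ k * μ s) := by gcongr with k; exact hdecay k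
    _ = c ^ p * (∑' k : ℕ, ((k : ℝ≥0∞) + 1) ^ p * 2⁻¹ ^ k) * μ s := by
        rw [mul_assoc, ← ENNReal.tsum_mul_right, ← ENNReal.tsum_mul_left]
        refine tsum_congr fun k => ?_
        rw [ENNReal.mul_rpow_of_nonneg _ _ hp.le]
        ring

lemma tsum_add_one_rpow_mul_inv_two_pow_ne_top (p : ℝ) :
    ∑' k : ℕ, ((k : ℝ≥0∞) + 1) ^ p * 2⁻¹ ^ k ≠ ∞ := by
  set n := ⌈p⌉₊
  have hsummable : Summable fun k : ℕ => ((k : ℝ) + 1) ^ n * (1 / 2) ^ k := by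
    have h := ((summable_nat_add_iff 1).2 (summable_pow_mul_geometric_of_norm_lt_one n
      (r := (1 / 2 : ℝ)) (by norm_num))).mul_left 2
    refine h.congr fun k => ?_
    push_cast
    ring
  refine ne_top_of_le_ne_top ((ENNReal.ofReal_tsum_of_nonneg (fun k => by positivity)
    hsummable) ▸ ENNReal.ofReal_ne_top) (ENNReal.tsum_le_tsum fun k => ?_)
  rw [ENNReal.ofReal_mul (by positivity), ENNReal.ofReal_pow (by positivity),
    ENNReal.ofReal_pow (by positivity), one_div, ENNReal.ofReal_inv_of_pos two_pos,
    ENNReal.ofReal_add (by positivity) zero_le_one, ENNReal.ofReal_natCast, ENNReal.ofReal_one,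
    ENNReal.ofReal_ofNat]
  gcongr ?_ * _
  rw [← ENNReal.rpow_natCast]
  exact ENNReal.rpow_le_rpow_of_exponent_le le_add_self (Nat.le_ceil p)

lemma exists_pos_ofReal_rpow_eq {S : ℝ≥0∞} (hS₀ : S ≠ 0) (hS : S ≠ ∞) {p : ℝ} (hp : 0 < p) :
    ∃ C : ℝ, 0 < C ∧ ENNReal.ofReal C ^ p = S := by
  have hroot : S ^ p⁻¹ ≠ ∞ := ENNReal.rpow_ne_top_of_nonneg (inv_nonneg.2 hp.le) hS
  refine ⟨(S ^ p⁻¹).toReal, ENNReal.toReal_pos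
    (ENNReal.rpow_pos (pos_iff_ne_zero.2 hS₀) hS).ne' hroot, ?_⟩
  rw [ENNReal.ofReal_toReal hroot, ENNReal.rpow_inv_rpow hp.ne']

section

variable (α : ℤ × ℤ → ℝ)

noncomputable def scaleTerm (k : ℤ) (x : ℝ) : ℝ≥0∞ :=
  ENNReal.ofReal (α (k, ⌊x / 2 ^ k⌋)) / ENNReal.ofReal ((2 : ℝ) ^ k)

/-- `∑ α(I) / |I|` over the dyadic `I ∋ x` with `|I| ≤ 2 ^ l`, indexed by the depth
`l - log₂ |I|`. -/
noncomputable def scaleSum (l : ℤ) (x : ℝ) : ℝ≥0∞ :=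
  ∑' d : ℕ, scaleTerm α (l - d) x

noncomputable def headSum (l : ℤ) (d : ℕ) (x : ℝ) : ℝ≥0∞ :=
  ∑ i ∈ Finset.range d, scaleTerm α (l - i) x

lemma measurable_scaleTerm (k : ℤ) : Measurable (scaleTerm α k) :=
  (measurable_from_top (f := fun n : ℤ =>
    ENNReal.ofReal (α (k, n)) / ENNReal.ofReal ((2 : ℝ) ^ k))).comp
    (Int.measurable_floor.comp (measurable_id.div_const _))

lemma measurable_scaleSum (l : ℤ) : Measurable (scaleSum α l) :=
  Measurable.tsum fun _ => measurable_scaleTerm α _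

lemma scaleTerm_eq_of_mem_dyI {k j n : ℤ} (hkj : k ≤ j) {x y : ℝ} (hx : x ∈ dyI k n)
    (hy : y ∈ dyI k n) : scaleTerm α j x = scaleTerm α j y := by
  rw [scaleTerm, scaleTerm, floor_div_eq_of_mem_dyI hkj hx hy]

lemma headSum_eq_of_mem_dyI {l n : ℤ} {d d' : ℕ} (hd : d' ≤ d + 1) {x y : ℝ}
    (hx : x ∈ dyI (l - d) n) (hy : y ∈ dyI (l - d) n) : headSum α l d' x = headSum α l d' y :=
  Finset.sum_congr rfl fun i hi => by
    have : i ≤ d := by have := Finset.mem_range.1 hi; omega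
    exact scaleTerm_eq_of_mem_dyI α (by omega) hx hy

lemma headSum_mono (l : ℤ) (x : ℝ) : Monotone fun d => headSum α l d x := fun _ _ h =>
  Finset.sum_le_sum_of_subset (Finset.range_subset_range.2 h)

lemma headSum_le_scaleSum (l : ℤ) (d : ℕ) (x : ℝ) : headSum α l d x ≤ scaleSum α l x :=
  ENNReal.sum_le_tsum _

lemma scaleSum_eq_iSup_headSum (l : ℤ) (x : ℝ) : scaleSum α l x = ⨆ d, headSum α l d x :=
  ENNReal.tsum_eq_iSup_nat

lemma scaleSum_eq_headSum_add (l : ℤ) (d : ℕ) (x : ℝ) :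
    scaleSum α l x = headSum α l d x + scaleSum α (l - d) x := by
  rw [scaleSum, ← ENNReal.summable.sum_add_tsum_nat_add' (k := d), headSum, scaleSum]
  congr 2 with i
  push_cast
  ring_nf

noncomputable def carlesonSum (l m : ℤ) (x : ℝ) : ℝ≥0∞ :=
  ∑' r : ℤ × ℤ,
    if dyI r.1 r.2 ⊆ dyI l m
    then (dyI r.1 r.2).indicator
      (fun _ => ENNReal.ofReal (α r) / ENNReal.ofReal ((2 : ℝ) ^ r.1)) x
    else 0

noncomputable def carlesonMass (l m : ℤ) : ℝ≥0∞ :=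
  ∑' r : ℤ × ℤ, if dyI r.1 r.2 ⊆ dyI l m then ENNReal.ofReal (α r) else 0

lemma lintegral_carlesonSum (l m : ℤ) : ∫⁻ x, carlesonSum α l m x = carlesonMass α l m := by
  simp only [carlesonSum]
  rw [lintegral_tsum fun r => by
    split_ifs
    exacts [(measurable_const.indicator (measurableSet_dyI _ _)).aemeasurable, aemeasurable_const]]
  refine tsum_congr fun r => ?_
  split_ifs
  · rw [lintegral_indicator_const (measurableSet_dyI _ _), volume_dyI,
      ENNReal.div_mul_cancel (by simpa using zpow_pos two_pos r.1) ENNReal.ofReal_ne_top]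
  · exact lintegral_zero

lemma tsum_ite_dyI_subset_of_mem {l m : ℤ} {x : ℝ} (hx : x ∈ dyI l m) (k : ℤ) :
    (∑' n : ℤ, if dyI k n ⊆ dyI l m then (dyI k n).indicator
      (fun _ => ENNReal.ofReal (α (k, n)) / ENNReal.ofReal ((2 : ℝ) ^ k)) x else 0)
      = if k ≤ l then scaleTerm α k x else 0 := by
  split_ifs with hkl
  · have hxk : x ∈ dyI k ⌊x / 2 ^ k⌋ := mem_dyI_iff.2 rfl
    rw [tsum_eq_single ⌊x / 2 ^ k⌋ fun n hn => ?_]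
    · rw [if_pos (dyI_subset_of_le hkl hxk hx), Set.indicator_of_mem hxk, scaleTerm]
    · have : x ∉ dyI k n := fun h => hn (mem_dyI_iff.1 h).symm
      simp [this]
  · exact ENNReal.tsum_eq_zero.2 fun n => if_neg fun h => hkl (le_of_dyI_subset h)

lemma carlesonSum_eq_indicator (l m : ℤ) :
    carlesonSum α l m = (dyI l m).indicator (scaleSum α l) := by
  ext x
  by_cases hx : x ∈ dyI l m
  · rw [carlesonSum, Set.indicator_of_mem hx, ENNReal.tsum_prod']
    simp_rw [tsum_ite_dyI_subset_of_mem α hx]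
    exact tsum_int_ite_le_eq_tsum_nat _ l
  · rw [carlesonSum, Set.indicator_of_notMem hx]
    refine ENNReal.tsum_eq_zero.2 fun r => ?_
    split_ifs with h
    · exact Set.indicator_of_notMem (fun hr => hx (h hr)) _
    · rfl

lemma setLIntegral_scaleSum (l m : ℤ) :
    ∫⁻ x in dyI l m, scaleSum α l x = carlesonMass α l m := by
  rw [← lintegral_indicator (measurableSet_dyI l m), ← carlesonSum_eq_indicator,
    lintegral_carlesonSum]

def superlevel (t : ℝ≥0∞) (l m : ℤ) : Set ℝ :=
  dyI l m ∩ {x | t < scaleSum α l x}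

lemma mul_volume_superlevel_le {N : ℝ≥0∞} {l m : ℤ}
    (hC : carlesonMass α l m ≤ N * volume (dyI l m)) (u : ℝ≥0∞) :
    u * volume (superlevel α u l m) ≤ N * volume (dyI l m) :=
  calc u * volume (superlevel α u l m) = ∫⁻ _ in superlevel α u l m, u :=
        (setLIntegral_const _ _).symm
    _ ≤ ∫⁻ x in superlevel α u l m, scaleSum α l x :=
        setLIntegral_mono (measurable_scaleSum α l) fun _ hx => hx.2.le
    _ ≤ ∫⁻ x in dyI l m, scaleSum α l x := lintegral_mono_set Set.inter_subset_left
    _ = carlesonMass α l m := setLIntegral_scaleSum α l m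
    _ ≤ N * volume (dyI l m) := hC

/-- The maximal dyadic intervals `dyI (l - d) n ⊆ dyI l m` on which the partial sums of
`scaleSum α l` exceed `u`, recorded as `(d, n)`. -/
def stoppingIntervals (l m : ℤ) (u : ℝ≥0∞) : Set (ℕ × ℤ) :=
  {r | dyI (l - r.1) r.2 ⊆ dyI l m ∧
    ∀ x ∈ dyI (l - r.1) r.2, headSum α l r.1 x ≤ u ∧ u < headSum α l (r.1 + 1) x}

lemma superlevel_add_subset (t u : ℝ≥0∞) (l m : ℤ) :
    superlevel α (t + u) l m ⊆
      ⋃ r ∈ stoppingIntervals α l m u, superlevel α t (l - r.1) r.2 := by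
  rintro x ⟨hxJ, hxt⟩
  have hex : ∃ d, u < headSum α l d x := by
    rw [← lt_iSup_iff, ← scaleSum_eq_iSup_headSum]
    exact lt_of_le_of_lt le_add_self hxt
  have hfind : Nat.find hex ≠ 0 := by simp [Nat.find_eq_zero, headSum]
  obtain ⟨d, hd⟩ := Nat.exists_eq_succ_of_ne_zero hfind
  have hstop : headSum α l d x ≤ u ∧ u < headSum α l (d + 1) x := by
    refine ⟨not_lt.1 (Nat.find_min hex (by omega)), ?_⟩
    have := Nat.find_spec hex
    rwa [hd] at this
  have hxI : x ∈ dyI (l - d) ⌊x / 2 ^ (l - d)⌋ := mem_dyI_iff.2 rfl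
  refine Set.mem_biUnion (x := (d, ⌊x / 2 ^ (l - d)⌋))
    ⟨dyI_subset_of_le (by omega) hxI hxJ, fun y hy => ?_⟩ ⟨hxI, ?_⟩
  · rwa [headSum_eq_of_mem_dyI α (Nat.le_succ d) hy hxI,
      headSum_eq_of_mem_dyI α le_rfl hy hxI]
  · show t < scaleSum α (l - d) x
    by_contra! h
    have := scaleSum_eq_headSum_add α l d x
    exact hxt.not_ge (this ▸ add_comm t u ▸ add_le_add hstop.1 h)

lemma pairwiseDisjoint_stoppingIntervals (l m : ℤ) (u : ℝ≥0∞) :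
    (stoppingIntervals α l m u).PairwiseDisjoint fun r => dyI (l - r.1) r.2 := by
  have depth_le : ∀ r ∈ stoppingIntervals α l m u, ∀ r' ∈ stoppingIntervals α l m u,
      ∀ x ∈ dyI (l - r.1) r.2, x ∈ dyI (l - r'.1) r'.2 → r.1 ≤ r'.1 := by
    intro r hr r' hr' x hx hx'
    by_contra! h
    exact ((hr'.2 x hx').2.trans_le (headSum_mono α l x h)).not_ge (hr.2 x hx).1
  intro r hr r' hr' hne
  refine Set.disjoint_left.2 fun x hx hx' => hne ?_
  have hdepth := le_antisymm (depth_le r hr r' hr' x hx hx') (depth_le r' hr' r hr x hx' hx)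
  exact Prod.ext hdepth ((mem_dyI_iff.1 hx).symm.trans (hdepth ▸ mem_dyI_iff.1 hx'))

lemma biUnion_stoppingIntervals_subset (l m : ℤ) (u : ℝ≥0∞) :
    ⋃ r ∈ stoppingIntervals α l m u, dyI (l - r.1) r.2 ⊆ superlevel α u l m := by
  simp only [Set.iUnion_subset_iff]
  intro r hr x hx
  exact ⟨hr.1 hx, (hr.2 x hx).2.trans_le (headSum_le_scaleSum α l _ x)⟩

lemma volume_superlevel_add_le {t c : ℝ≥0∞}
    (h : ∀ k n, volume (superlevel α t k n) ≤ c * volume (dyI k n)) (u : ℝ≥0∞) (l m : ℤ) :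
    volume (superlevel α (t + u) l m) ≤ c * volume (superlevel α u l m) := by
  set K := stoppingIntervals α l m u
  have hK : K.Countable := K.to_countable
  calc volume (superlevel α (t + u) l m)
      ≤ volume (⋃ r ∈ K, superlevel α t (l - r.1) r.2) :=
        measure_mono (superlevel_add_subset α t u l m)
    _ ≤ ∑' r : K, volume (superlevel α t (l - r.1.1) r.1.2) := measure_biUnion_le _ hK _
    _ ≤ ∑' r : K, c * volume (dyI (l - r.1.1) r.1.2) := ENNReal.tsum_le_tsum fun r => h _ _
    _ = c * volume (⋃ r ∈ K, dyI (l - r.1) r.2) := by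
        rw [ENNReal.tsum_mul_left,
          measure_biUnion hK (pairwiseDisjoint_stoppingIntervals α l m u)
            fun r _ => measurableSet_dyI _ _]
    _ ≤ c * volume (superlevel α u l m) :=
        by gcongr; exact biUnion_stoppingIntervals_subset α l m u

lemma volume_superlevel_le_inv_two_pow {N : ℝ≥0∞} (hN₀ : N ≠ 0) (hN : N ≠ ∞)
    (hC : ∀ l m, carlesonMass α l m ≤ N * volume (dyI l m)) (k : ℕ) (l m : ℤ) :
    volume (superlevel α (k * (2 * N)) l m) ≤ 2⁻¹ ^ k * volume (dyI l m) := by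
  have half : ∀ l m, volume (superlevel α (2 * N) l m) ≤ 2⁻¹ * volume (dyI l m) := by
    intro l m
    have h := mul_volume_superlevel_le α (hC l m) (2 * N)
    rw [mul_assoc, mul_left_comm, ENNReal.mul_le_mul_iff_right hN₀ hN] at h
    calc volume (superlevel α (2 * N) l m)
        = 2⁻¹ * (2 * volume (superlevel α (2 * N) l m)) := by
          rw [← mul_assoc, ENNReal.inv_mul_cancel two_ne_zero ENNReal.ofNat_ne_top, one_mul]
      _ ≤ 2⁻¹ * volume (dyI l m) := by gcongr
  induction k generalizing l m with
  | zero => simpa [superlevel] using measure_mono (μ := volume) Set.inter_subset_left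
  | succ k ih =>
    calc volume (superlevel α (↑(k + 1) * (2 * N)) l m)
        = volume (superlevel α (k * (2 * N) + 2 * N) l m) := by push_cast; rw [add_one_mul]
      _ ≤ 2⁻¹ ^ k * volume (superlevel α (2 * N) l m) := volume_superlevel_add_le α ih _ l m
      _ ≤ 2⁻¹ ^ k * (2⁻¹ * volume (dyI l m)) := by gcongr; exact half l m
      _ = 2⁻¹ ^ (k + 1) * volume (dyI l m) := by rw [pow_succ, mul_assoc]

lemma lintegral_carlesonSum_rpow {p : ℝ} (hp : 0 < p) (l m : ℤ) :
    ∫⁻ x, carlesonSum α l m x ^ p = ∫⁻ x in dyI l m, scaleSum α l x ^ p := by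
  rw [carlesonSum_eq_indicator, ← lintegral_indicator (measurableSet_dyI l m)]
  congr with x
  by_cases hx : x ∈ dyI l m <;> simp [hx, hp]

lemma setLIntegral_scaleSum_rpow_eq_zero {p : ℝ} (hp : 0 < p) {l m : ℤ}
    (h : carlesonMass α l m = 0) :
    ∫⁻ x in dyI l m, scaleSum α l x ^ p = 0 := by
  have hF : scaleSum α l =ᵐ[volume.restrict (dyI l m)] 0 :=
    (lintegral_eq_zero_iff (measurable_scaleSum α l)).1 ((setLIntegral_scaleSum α l m).trans h)
  rw [lintegral_congr_ae (g := fun _ => 0) (hF.mono fun x hx => by simp [hx, hp]),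
    lintegral_zero]

lemma setLIntegral_scaleSum_rpow_le {p : ℝ} (hp : 0 < p) {N : ℝ≥0∞} (hN₀ : N ≠ 0)
    (hN : N ≠ ∞) (hC : ∀ l m, carlesonMass α l m ≤ N * volume (dyI l m)) (l m : ℤ) :
    ∫⁻ x in dyI l m, scaleSum α l x ^ p
      ≤ (2 * N) ^ p * (∑' k : ℕ, ((k : ℝ≥0∞) + 1) ^ p * 2⁻¹ ^ k) * volume (dyI l m) :=
  setLIntegral_rpow_le_of_volume_superlevel_le (measurable_scaleSum α l)
    (mul_ne_zero two_ne_zero hN₀) (ENNReal.mul_ne_top ENNReal.ofNat_ne_top hN) hp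
    fun k => volume_superlevel_le_inv_two_pow α hN₀ hN hC k l m

end

/-- **The dyadic John–Nirenberg inequality for Carleson measures.**  Let
`α : {dyadic intervals} → [0,∞)` (indexed by `(k,n) ↦ [n2^k,(n+1)2^k)`) satisfy the
Carleson measure condition `∑_{I ⊆ J} α(I) ≤ N |J|` for every dyadic `J`.  Then for
`1 < p < ∞` and every dyadic `J = [m2^l,(m+1)2^l)`,
`‖∑_{I ⊆ J} (α(I)/|I|) 1_I‖_p ≤ C_p N |J|^{1/p}`, stated in the equivalent form
`∫ (∑_{I ⊆ J} (α(I)/|I|) 1_I)^p ≤ (C_p N)^p |J|`. -/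
theorem dyadic_john_nirenberg (p : ℝ) (hp : 1 < p) :
    ∃ C : ℝ, 0 < C ∧
      ∀ α : ℤ × ℤ → ℝ, (∀ r, 0 ≤ α r) →
      ∀ N : ℝ, 0 ≤ N →
        (∀ l m : ℤ,
          (∑' r : ℤ × ℤ, if dyI r.1 r.2 ⊆ dyI l m then ENNReal.ofReal (α r) else 0)
            ≤ ENNReal.ofReal N * ENNReal.ofReal ((2:ℝ) ^ l)) →
        ∀ l m : ℤ,
          ∫⁻ x : ℝ,
              (∑' r : ℤ × ℤ,
                if dyI r.1 r.2 ⊆ dyI l m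
                then (dyI r.1 r.2).indicator
                  (fun _ => ENNReal.ofReal (α r) / ENNReal.ofReal ((2:ℝ) ^ r.1)) x
                else 0) ^ p
            ≤ ENNReal.ofReal (C * N) ^ p * ENNReal.ofReal ((2:ℝ) ^ l) := by
  have hp₀ : 0 < p := one_pos.trans hp
  set S := ∑' k : ℕ, ((k : ℝ≥0∞) + 1) ^ p * 2⁻¹ ^ k
  have hS₀ : S ≠ 0 := ne_of_gt <| zero_lt_one.trans_le <| by
    simpa using ENNReal.le_tsum (f := fun k : ℕ => ((k : ℝ≥0∞) + 1) ^ p * 2⁻¹ ^ k) 0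
  obtain ⟨C, hC₀, hCS⟩ :=
    exists_pos_ofReal_rpow_eq hS₀ (tsum_add_one_rpow_mul_inv_two_pow_ne_top p) hp₀
  refine ⟨2 * C, by positivity, fun α _ N hN hC l m => ?_⟩
  have hC' : ∀ l m, carlesonMass α l m ≤ ENNReal.ofReal N * volume (dyI l m) := fun l m => by
    rw [volume_dyI]
    exact hC l m
  change ∫⁻ x, carlesonSum α l m x ^ p ≤ _
  rw [lintegral_carlesonSum_rpow α hp₀, ← volume_dyI l m]
  rcases hN.eq_or_lt with rfl | hN
  · rw [setLIntegral_scaleSum_rpow_eq_zero α hp₀ (by simpa using hC' l m)]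
    exact zero_le
  calc ∫⁻ x in dyI l m, scaleSum α l x ^ p
      ≤ (2 * ENNReal.ofReal N) ^ p * S * volume (dyI l m) :=
        setLIntegral_scaleSum_rpow_le α hp₀ (ENNReal.ofReal_pos.2 hN).ne'
          ENNReal.ofReal_ne_top hC' l m
    _ = ENNReal.ofReal (2 * C * N) ^ p * volume (dyI l m) := by
        rw [mul_right_comm 2 C N, ENNReal.ofReal_mul (by positivity),
          ENNReal.ofReal_mul zero_le_two, ENNReal.ofReal_ofNat,
          ENNReal.mul_rpow_of_nonneg (2 * ENNReal.ofReal N) _ hp₀.le, hCS]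
end
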